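/- The plus state |+⟩ = 2^{-n/2}(1,…,1)ᵀ is an eigenvector of the mixing Hamiltonian H_B = -Σ_{i=1}^n σ^x_i with eigenvalue -n; consequently, for every p ≥ 1 and every (β⋆,γ⋆) ∈ ℝ^p × ℝ^p, the derivative of the depth-(p+1) QAOA state with respect to β_1 at the padded point Γ^{p+1}(1,1) equals i·n times the depth-p QAOA state |β⋆,γ⋆⟩, and therefore ∂E_{p+1}/∂β_1 vanishes at Γ^{p+1}(1,1). -/

import Mathlib

open Matrix Complex

noncomputable section

/-- Computational basis index set for `n` qubits, identified with `Fin 2 ^ n` via binary digits. -/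
abbrev QIdx (n : ℕ) := Fin n → Fin 2

/-- The Pauli X matrix. -/
def pauliX : Matrix (Fin 2) (Fin 2) ℂ := !![0, 1; 1, 0]

/-- The Pauli Z matrix. -/
def pauliZ : Matrix (Fin 2) (Fin 2) ℂ := !![1, 0; 0, -1]

/-- The `n`-fold Kronecker product with `M` in the `i`-th tensor factor and the 2×2 identity in
every other factor, realized as a matrix on `ℂ^(2^n)` with indices `Fin n → Fin 2`. -/
def pauliAt {n : ℕ} (M : Matrix (Fin 2) (Fin 2) ℂ) (i : Fin n) :
    Matrix (QIdx n) (QIdx n) ℂ :=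
  Matrix.of fun s t => ∏ j, if j = i then M (s j) (t j) else if s j = t j then 1 else 0

/-- `σ^x_i`. -/
def sigmaX {n : ℕ} (i : Fin n) : Matrix (QIdx n) (QIdx n) ℂ := pauliAt pauliX i

/-- `σ^z_i`. -/
def sigmaZ {n : ℕ} (i : Fin n) : Matrix (QIdx n) (QIdx n) ℂ := pauliAt pauliZ i

lemma sigmaZ_eq_diagonal {n : ℕ} (i : Fin n) :
    sigmaZ i = Matrix.diagonal (fun s => pauliZ (s i) (s i)) := by
  ext s t
  simp only [sigmaZ, pauliAt, Matrix.of_apply, Matrix.diagonal_apply]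
  by_cases h : s = t
  · subst h
    simp [Finset.prod_ite_eq']
  · rw [if_neg h]
    obtain ⟨j₀, hj₀⟩ := Function.ne_iff.mp h
    refine Finset.prod_eq_zero (Finset.mem_univ j₀) ?_
    by_cases hji : j₀ = i
    · subst hji
      rw [if_pos rfl]
      have hz : ∀ a b : Fin 2, a ≠ b → pauliZ a b = 0 := by
        intro a b hab
        fin_cases a <;> fin_cases b <;> simp_all [pauliZ]
      exact hz _ _ hj₀
    · rw [if_neg hji, if_neg hj₀]

lemma sigmaZ_mul_comm {n : ℕ} (i j : Fin n) : sigmaZ i * sigmaZ j = sigmaZ j * sigmaZ i := by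
  rw [sigmaZ_eq_diagonal, sigmaZ_eq_diagonal, Matrix.diagonal_mul_diagonal,
    Matrix.diagonal_mul_diagonal]
  ext s
  simp [mul_comm]

/-- The MaxCut Hamiltonian `H_C = Σ_{{i,j} ∈ E} σ^z_i σ^z_j`. -/
def hamC (n : ℕ) (G : SimpleGraph (Fin n)) [DecidableRel G.Adj] :
    Matrix (QIdx n) (QIdx n) ℂ :=
  ∑ e ∈ G.edgeFinset,
    Sym2.lift ⟨fun i j => sigmaZ i * sigmaZ j, fun i j => sigmaZ_mul_comm i j⟩ e

/-- The mixing Hamiltonian `H_B = -Σ_i σ^x_i`. -/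
def hamB (n : ℕ) : Matrix (QIdx n) (QIdx n) ℂ := -(∑ i : Fin n, sigmaX i)

/-- `U_B(β) = exp(-i β H_B)`. -/
def uB (n : ℕ) (β : ℝ) : Matrix (QIdx n) (QIdx n) ℂ :=
  NormedSpace.exp ((-(Complex.I) * (β : ℂ)) • hamB n)

/-- `U_C(γ) = exp(-i γ H_C)`. -/
def uC (n : ℕ) (G : SimpleGraph (Fin n)) [DecidableRel G.Adj] (γ : ℝ) :
    Matrix (QIdx n) (QIdx n) ℂ :=
  NormedSpace.exp ((-(Complex.I) * (γ : ℂ)) • hamC n G)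

/-- The plus state `|+⟩ = 2^{-n/2} (1,…,1)ᵀ`. -/
def plusState (n : ℕ) : QIdx n → ℂ := fun _ => ((Real.sqrt 2 : ℂ))⁻¹ ^ n

/-- The `m`-th layer `U_B(β_{m+1}) U_C(γ_{m+1})` of the QAOA circuit (`m` is 0-indexed);
`1` if `m` is out of range. -/
def qaoaLayer (n : ℕ) (G : SimpleGraph (Fin n)) [DecidableRel G.Adj] {p : ℕ}
    (β γ : Fin p → ℝ) (m : ℕ) : Matrix (QIdx n) (QIdx n) ℂ :=
  if h : m < p then uB n (β ⟨m, h⟩) * uC n G (γ ⟨m, h⟩) else 1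

/-- The ordered product of the (0-indexed) layers `a, a+1, …, a+len-1` of the QAOA circuit, with
higher layers acting later (to the left). -/
def uProd (n : ℕ) (G : SimpleGraph (Fin n)) [DecidableRel G.Adj] {p : ℕ}
    (β γ : Fin p → ℝ) (a len : ℕ) : Matrix (QIdx n) (QIdx n) ℂ :=
  (((List.range' a len).reverse).map (qaoaLayer n G β γ)).prod

/-- The depth-`p` QAOA state `|β,γ⟩ = U_B(β_p) U_C(γ_p) ⋯ U_B(β_1) U_C(γ_1) |+⟩`. -/
def qaoaState (n : ℕ) (G : SimpleGraph (Fin n)) [DecidableRel G.Adj] {p : ℕ}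
    (β γ : Fin p → ℝ) : QIdx n → ℂ :=
  (uProd n G β γ 0 p).mulVec (plusState n)

/-- The depth-`p` QAOA cost function `E_p(β,γ) = ⟨β,γ| H_C |β,γ⟩` as a real-valued function on
`ℝ^p × ℝ^p`. -/
def energyE (n : ℕ) (G : SimpleGraph (Fin n)) [DecidableRel G.Adj] (p : ℕ)
    (x : (Fin p → ℝ) × (Fin p → ℝ)) : ℝ :=
  (star (qaoaState n G x.1 x.2) ⬝ᵥ (hamC n G).mulVec (qaoaState n G x.1 x.2)).re

/-- The point `Γ^{p+1}(i,j)` obtained from `(β⋆,γ⋆) ∈ ℝ^p × ℝ^p` by inserting a `0` at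
position `i` in the `β`-part and at position `j` in the `γ`-part. -/
def padded {p : ℕ} (x : (Fin p → ℝ) × (Fin p → ℝ)) (i j : Fin (p + 1)) :
    (Fin (p + 1) → ℝ) × (Fin (p + 1) → ℝ) :=
  (i.insertNth 0 x.1, j.insertNth 0 x.2)

/-- The coordinate direction in `ℝ^p × ℝ^p` corresponding to `β_l` (`Sum.inl l`) or
`γ_l` (`Sum.inr l`). -/
def coordDir {p : ℕ} : Fin p ⊕ Fin p → (Fin p → ℝ) × (Fin p → ℝ) :=
  Sum.elim (fun l => (Pi.single l 1, 0)) (fun l => (0, Pi.single l 1))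

/-- Partial derivative of a real function on `ℝ^p × ℝ^p` in the coordinate direction `a`. -/
def pderiv' {p : ℕ} (f : ((Fin p → ℝ) × (Fin p → ℝ)) → ℝ)
    (a : Fin p ⊕ Fin p) (x : (Fin p → ℝ) × (Fin p → ℝ)) : ℝ :=
  fderiv ℝ f x (coordDir a)

/-- The Hessian matrix of a real function on `ℝ^p × ℝ^p`, with rows and columns indexed by the
coordinates `β_1,…,β_p` (`Sum.inl`) and `γ_1,…,γ_p` (`Sum.inr`). -/
def hessian {p : ℕ} (f : ((Fin p → ℝ) × (Fin p → ℝ)) → ℝ)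
    (x : (Fin p → ℝ) × (Fin p → ℝ)) : Matrix (Fin p ⊕ Fin p) (Fin p ⊕ Fin p) ℝ :=
  Matrix.of fun a b => pderiv' (pderiv' f b) a x

/-- The commutator `[A, B] = AB - BA`. -/
def commMat {n : ℕ} (A B : Matrix (QIdx n) (QIdx n) ℂ) : Matrix (QIdx n) (QIdx n) ℂ :=
  A * B - B * A

end


/-!
Every `σ^x_i` fixes `|+⟩` because the rows of `X` sum to `1`, so `H_B |+⟩ = -n |+⟩` and
`U_B(β) |+⟩ = e^{i n β} |+⟩`. At `Γ^{p+1}(1,1)` the first layer has `γ_1 = 0`, so along the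
`β_1`-line through that point the depth-`(p+1)` state is `e^{i n β_1} |β⋆,γ⋆⟩`. Differentiating
at `β_1 = 0` gives `i n |β⋆,γ⋆⟩`, and the energy is constant on the line because the phase cancels
in `⟨ψ| H_C |ψ⟩`.
-/

open NormedSpace

section MatrixExp

variable {m 𝕂 : Type*} [Fintype m] [DecidableEq m] [RCLike 𝕂]

-- Matrices carry no global norm. `exp` only sees the product topology, and all norms on a
-- finite-dimensional space are equivalent, so the choice of norm is immaterial.
attribute [local instance] Matrix.linftyOpNormedRing Matrix.linftyOpNormedAlgebra

theorem Matrix.pow_mulVec_of_mulVec_eq_smul {M : Matrix m m 𝕂} {v : m → 𝕂} {μ : 𝕂}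
    (h : M *ᵥ v = μ • v) (k : ℕ) : M ^ k *ᵥ v = μ ^ k • v := by
  induction k with
  | zero => simp
  | succ k ih => rw [pow_succ', ← mulVec_mulVec, ih, mulVec_smul, h, smul_smul, pow_succ]

theorem Matrix.exp_mulVec_of_mulVec_eq_smul {M : Matrix m m 𝕂} {v : m → 𝕂} {μ : 𝕂}
    (h : M *ᵥ v = μ • v) : exp M *ᵥ v = exp μ • v := by
  let mulVecHom : Matrix m m 𝕂 →+ (m → 𝕂) := AddMonoidHom.mk' (· *ᵥ v) fun A B => add_mulVec A B v
  have hM := (exp_series_hasSum_exp' (𝕂 := 𝕂) M).map mulVecHom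
    (continuous_id.matrix_mulVec continuous_const)
  have hterm : mulVecHom ∘ (fun k => (k.factorial⁻¹ : 𝕂) • M ^ k) =
      fun k => ((k.factorial⁻¹ : 𝕂) • μ ^ k) • v := by
    funext k
    simp [mulVecHom, smul_mulVec, pow_mulVec_of_mulVec_eq_smul h, smul_smul]
  exact hM.unique (hterm ▸ (exp_series_hasSum_exp' (𝕂 := 𝕂) μ).smul_const v)

end MatrixExp

section MatrixCalculus

variable {m E : Type*} [Fintype m] [DecidableEq m] [NormedAddCommGroup E] [NormedSpace ℝ E]

attribute [local instance] Matrix.linftyOpNormedRing Matrix.linftyOpNormedAlgebra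

theorem differentiable_exp_mul_ofReal_smul (A : Matrix m m ℂ) (c : ℂ) :
    Differentiable ℝ fun t : ℝ => exp ((c * t) • A) :=
  ((differentiable_exp_smul_const ℂ A).restrictScalars ℝ).comp (by fun_prop)

theorem Differentiable.matrix_mulVec_const {f : E → Matrix m m ℂ} (hf : Differentiable ℝ f)
    (v : m → ℂ) : Differentiable ℝ fun x => f x *ᵥ v :=
  (LinearMap.toContinuousLinearMap
    ((mulVecBilin ℝ ℂ).flip v : Matrix m m ℂ →ₗ[ℝ] m → ℂ)).differentiable.comp hf

end MatrixCalculus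

theorem star_smul_dotProduct_mulVec_smul {m R : Type*} [Fintype m] [CommRing R] [StarRing R]
    (A : Matrix m m R) (w : m → R) {c : R} (hc : star c * c = 1) :
    star (c • w) ⬝ᵥ A *ᵥ (c • w) = star w ⬝ᵥ A *ᵥ w := by
  rw [star_smul, mulVec_smul, smul_dotProduct, dotProduct_smul, smul_smul, hc, one_smul]

theorem pauliAt_mulVec_const {n : ℕ} {M : Matrix (Fin 2) (Fin 2) ℂ} (hM : ∀ a, ∑ b, M a b = 1)
    (i : Fin n) (c : ℂ) : pauliAt M i *ᵥ (fun _ => c) = fun _ => c := by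
  funext s
  simp only [mulVec, dotProduct, pauliAt, of_apply]
  rw [← Finset.sum_mul,
    ← Fintype.prod_sum fun j b => if j = i then M (s j) b else if s j = b then (1 : ℂ) else 0,
    Finset.prod_eq_one, one_mul]
  intro j _
  split_ifs with hj
  · exact hM (s j)
  · simp

theorem hamB_mulVec_plusState (n : ℕ) : hamB n *ᵥ plusState n = (-(n : ℂ)) • plusState n := by
  have hX : ∀ a, ∑ b, pauliX a b = 1 := by
    intro a
    fin_cases a <;> simp [pauliX]
  have hfix (i : Fin n) : sigmaX i *ᵥ plusState n = plusState n := pauliAt_mulVec_const hX i _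
  simp only [hamB, neg_mulVec, sum_mulVec, hfix, Finset.sum_const, Finset.card_univ,
    Fintype.card_fin, neg_smul, Nat.cast_smul_eq_nsmul]

theorem uB_mulVec_plusState (n : ℕ) (t : ℝ) :
    uB n t *ᵥ plusState n = Complex.exp (I * n * t) • plusState n := by
  have heigen : ((-I * t) • hamB n) *ᵥ plusState n = (I * n * t) • plusState n := by
    rw [smul_mulVec, hamB_mulVec_plusState, smul_smul]
    congr 1
    ring
  rw [uB, exp_mulVec_of_mulVec_eq_smul heigen, Complex.exp_eq_exp_ℂ]

section QAOA

variable {n : ℕ} (G : SimpleGraph (Fin n)) [DecidableRel G.Adj] {p : ℕ}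

theorem uC_zero : uC n G 0 = 1 := by
  simp [uC]

theorem uProd_succ (β γ : Fin p → ℝ) (a len : ℕ) :
    uProd n G β γ a (len + 1) = uProd n G β γ (a + 1) len * qaoaLayer n G β γ a := by
  simp [uProd, List.range'_succ]

theorem qaoaLayer_cons_succ (β γ : Fin p → ℝ) (b c : ℝ) (k : ℕ) :
    qaoaLayer n G (Fin.cons b β : Fin (p + 1) → ℝ) (Fin.cons c γ) (k + 1) =
      qaoaLayer n G β γ k := by
  by_cases h : k < p
  · simp [qaoaLayer, h, ← Fin.succ_mk]
  · simp [qaoaLayer, h]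

theorem uProd_cons_succ (β γ : Fin p → ℝ) (b c : ℝ) (a len : ℕ) :
    uProd n G (Fin.cons b β : Fin (p + 1) → ℝ) (Fin.cons c γ) (a + 1) len =
      uProd n G β γ a len := by
  induction len generalizing a with
  | zero => rfl
  | succ len ih => rw [uProd_succ, uProd_succ, qaoaLayer_cons_succ, ih]

theorem qaoaState_cons_cons_zero (β γ : Fin p → ℝ) (t : ℝ) :
    qaoaState n G (Fin.cons t β : Fin (p + 1) → ℝ) (Fin.cons 0 γ) =
      Complex.exp (I * n * t) • qaoaState n G β γ := by
  have hfirst : qaoaLayer n G (Fin.cons t β : Fin (p + 1) → ℝ) (Fin.cons 0 γ) 0 = uB n t := by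
    simp [qaoaLayer, uC_zero]
  rw [qaoaState, uProd_succ, uProd_cons_succ, hfirst, ← mulVec_mulVec, uB_mulVec_plusState,
    mulVec_smul, qaoaState]

theorem energyE_cons_cons_zero (β γ : Fin p → ℝ) (t : ℝ) :
    energyE n G (p + 1) (Fin.cons t β, Fin.cons 0 γ) = energyE n G p (β, γ) := by
  have hphase : star (Complex.exp (I * n * t)) * Complex.exp (I * n * t) = 1 := by
    rw [Complex.star_def, ← Complex.exp_conj, ← Complex.exp_add]
    simp [Complex.conj_ofReal]
  simp only [energyE, qaoaState_cons_cons_zero, star_smul_dotProduct_mulVec_smul _ _ hphase]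

theorem padded_zero_add_smul_coordDir (β γ : Fin p → ℝ) (t : ℝ) :
    padded (β, γ) 0 0 + t • coordDir (Sum.inl 0) = (Fin.cons t β, Fin.cons 0 γ) := by
  ext j <;> cases j using Fin.cases <;> simp [padded, coordDir, Fin.insertNth_zero']

section Differentiability

attribute [local instance] Matrix.linftyOpNormedRing Matrix.linftyOpNormedAlgebra

theorem differentiable_qaoaLayer (k : ℕ) :
    Differentiable ℝ fun x : (Fin p → ℝ) × (Fin p → ℝ) => qaoaLayer n G x.1 x.2 k := by
  have huB : Differentiable ℝ (uB n) := differentiable_exp_mul_ofReal_smul _ _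
  have huC : Differentiable ℝ (uC n G) := differentiable_exp_mul_ofReal_smul _ _
  by_cases h : k < p
  · simp only [qaoaLayer, dif_pos h]
    exact (huB.comp (by fun_prop)).mul (huC.comp (by fun_prop))
  · simp only [qaoaLayer, dif_neg h]
    exact differentiable_const _

theorem differentiable_uProd (a len : ℕ) :
    Differentiable ℝ fun x : (Fin p → ℝ) × (Fin p → ℝ) => uProd n G x.1 x.2 a len := by
  induction len generalizing a with
  | zero => exact differentiable_const _
  | succ len ih =>
    simp only [uProd_succ]
    exact (ih (a + 1)).mul (differentiable_qaoaLayer G a)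

end Differentiability

theorem differentiable_qaoaState :
    Differentiable ℝ fun x : (Fin p → ℝ) × (Fin p → ℝ) => qaoaState n G x.1 x.2 :=
  (differentiable_uProd G 0 p).matrix_mulVec_const _

theorem differentiable_energyE : Differentiable ℝ (energyE n G p) := by
  have hquad : Differentiable ℝ fun w : QIdx n → ℂ => (star w ⬝ᵥ hamC n G *ᵥ w).re := by
    simp only [dotProduct, mulVec, Pi.star_apply]
    fun_prop
  exact hquad.comp (differentiable_qaoaState G)

end QAOA

theorem stmt3_general (n : ℕ) (G : SimpleGraph (Fin n)) [DecidableRel G.Adj]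
    (p : ℕ) (β γ : Fin p → ℝ) :
    (hamB n).mulVec (plusState n) = (-(n : ℂ)) • plusState n ∧
    fderiv ℝ (fun x : (Fin (p + 1) → ℝ) × (Fin (p + 1) → ℝ) => qaoaState n G x.1 x.2)
        (padded (β, γ) 0 0) (coordDir (Sum.inl 0)) =
      (Complex.I * (n : ℂ)) • qaoaState n G β γ ∧
    pderiv' (energyE n G (p + 1)) (Sum.inl 0) (padded (β, γ) 0 0) = 0 := by
  refine ⟨hamB_mulVec_plusState n, ?_, ?_⟩
  · have hphase : HasDerivAt (fun t : ℝ => Complex.exp (I * n * t)) (I * n) 0 := by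
      simpa using ((hasDerivAt_id (0 : ℂ)).const_mul (I * n)).cexp.comp_ofReal
    rw [← (differentiable_qaoaState G).differentiableAt.lineDeriv_eq_fderiv, lineDeriv]
    simp only [padded_zero_add_smul_coordDir, qaoaState_cons_cons_zero]
    exact (hphase.smul_const _).deriv
  · rw [pderiv', ← (differentiable_energyE G).differentiableAt.lineDeriv_eq_fderiv, lineDeriv]
    simp only [padded_zero_add_smul_coordDir, energyE_cons_cons_zero, deriv_const]

/-- `|+⟩` is an eigenvector of `H_B` with eigenvalue `-n`; the derivative of the
depth-`(p+1)` state with respect to `β₁` at `Γ^(p+1)(1,1)` is `i n` times the depth-`p` state,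
and `∂E_(p+1)/∂β₁` vanishes there. -/
theorem stmt3 (n : ℕ) (hn : 1 ≤ n) (G : SimpleGraph (Fin n)) [DecidableRel G.Adj]
    (p : ℕ) (hp : 1 ≤ p) (β γ : Fin p → ℝ) :
    (hamB n).mulVec (plusState n) = (-(n : ℂ)) • plusState n ∧
    fderiv ℝ (fun x : (Fin (p + 1) → ℝ) × (Fin (p + 1) → ℝ) => qaoaState n G x.1 x.2)
        (padded (β, γ) 0 0) (coordDir (Sum.inl 0)) =
      (Complex.I * (n : ℂ)) • qaoaState n G β γ ∧
    pderiv' (energyE n G (p + 1)) (Sum.inl 0) (padded (β, γ) 0 0) = 0 :=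
  stmt3_general n G p β γ
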